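/- Let W be an n×n orthogonal matrix and ε ∈ [0,1]. If (1/n)‖W‖₄⁴ ≥ 1 − ε, then there exists a signed permutation matrix P such that (1/n)‖W − P‖_F² ≤ 2ε. -/

import Mathlib

open Matrix Finset

/-- The fourth power of the entrywise ℓ⁴-norm of a matrix. -/
def l4pow4 {n : ℕ} (A : Matrix (Fin n) (Fin n) ℝ) : ℝ :=
  ∑ i, ∑ j, A i j ^ 4

/-- The squared Frobenius norm of a matrix. -/
def frobSq {n : ℕ} (A : Matrix (Fin n) (Fin n) ℝ) : ℝ :=
  ∑ i, ∑ j, A i j ^ 2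

/-- A signed permutation matrix: an orthogonal matrix all of whose entries are 0, 1 or -1. -/
def IsSignedPerm {n : ℕ} (P : Matrix (Fin n) (Fin n) ℝ) : Prop :=
  Pᵀ * P = 1 ∧ ∀ i j, P i j = 0 ∨ P i j = 1 ∨ P i j = -1

/-!
The entrywise squares `M i j = W i j ^ 2` of an orthogonal `W` form a doubly stochastic matrix,
and `‖W‖₄⁴ = ∑ i j, M i j * M i j` is the value at `M` of the linear functional
`X ↦ ∑ i j, X i j * M i j`.
By Birkhoff's theorem `M` is a convex combination of permutation matrices, so some permutation `σ`
does at least as well: `∑ i, W i (σ i) ^ 2 ≥ ‖W‖₄⁴`. Giving the permutation matrix of `σ` the signs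
of the entries `W i (σ i)` yields a signed permutation `P` with
`‖W - P‖_F² = 2n - 2 ∑ i, |W i (σ i)| ≤ 2n - 2 ∑ i, W i (σ i) ^ 2 ≤ 2 (n - ‖W‖₄⁴)`,
where the middle step uses `|W i j| ≤ 1`.
-/

section Orthogonal

variable {ι : Type*} [Fintype ι] [DecidableEq ι] {W : Matrix ι ι ℝ}

lemma sum_sq_col_eq_one_of_transpose_mul_self (hW : Wᵀ * W = 1) (j : ι) :
    ∑ i, W i j ^ 2 = 1 := by
  simpa [mul_apply, one_apply, sq] using congrFun (congrFun hW j) j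

lemma sum_sq_row_eq_one_of_transpose_mul_self (hW : Wᵀ * W = 1) (i : ι) :
    ∑ j, W i j ^ 2 = 1 := by
  have hWWt : W * Wᵀ = 1 := mul_eq_one_comm.mp hW
  simpa [mul_apply, one_apply, sq] using congrFun (congrFun hWWt i) i

lemma abs_apply_le_one_of_transpose_mul_self (hW : Wᵀ * W = 1) (i j : ι) : |W i j| ≤ 1 := by
  refine abs_le_one_iff_mul_self_le_one.mpr ?_
  rw [← sq, ← sum_sq_row_eq_one_of_transpose_mul_self hW i]
  exact single_le_sum (f := fun j ↦ W i j ^ 2) (fun _ _ ↦ sq_nonneg _) (mem_univ j)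

lemma of_sq_mem_doublyStochastic (hW : Wᵀ * W = 1) :
    of (fun i j ↦ W i j ^ 2) ∈ doublyStochastic ℝ ι :=
  mem_doublyStochastic_iff_sum.mpr ⟨fun _ _ ↦ sq_nonneg _,
    sum_sq_row_eq_one_of_transpose_mul_self hW,
    sum_sq_col_eq_one_of_transpose_mul_self hW⟩

end Orthogonal

lemma exists_perm_sum_mul_le_of_mem_doublyStochastic {ι : Type*} [Fintype ι] [DecidableEq ι]
    {M : Matrix ι ι ℝ} (hM : M ∈ doublyStochastic ℝ ι) (A : Matrix ι ι ℝ) :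
    ∃ σ : Equiv.Perm ι, ∑ i, ∑ j, M i j * A i j ≤ ∑ i, A i (σ i) := by
  let f : Matrix ι ι ℝ →ₗ[ℝ] ℝ :=
    { toFun := fun X ↦ ∑ i, ∑ j, X i j * A i j
      map_add' := fun X Y ↦ by simp only [Matrix.add_apply, add_mul, sum_add_distrib]
      map_smul' := fun c X ↦ by simp only [Matrix.smul_apply, smul_eq_mul, mul_sum, mul_assoc,
        RingHom.id_apply] }
  rw [← SetLike.mem_coe, doublyStochastic_eq_convexHull_permMatrix] at hM
  obtain ⟨_, ⟨σ, rfl⟩, hσ⟩ := (f.convexOn convex_univ).exists_ge_of_mem_convexHull (by simp) hM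
  refine ⟨σ, hσ.trans_eq ?_⟩
  simp [f, Equiv.Perm.permMatrix, PEquiv.toMatrix_apply]

section SignedPerm

variable {ι : Type*} [Fintype ι] [DecidableEq ι]

lemma diagonal_mul_permMatrix_apply (s : ι → ℝ) (σ : Equiv.Perm ι) (i j : ι) :
    (diagonal s * σ.permMatrix ℝ) i j = if σ i = j then s i else 0 := by
  simp [Equiv.Perm.permMatrix, PEquiv.toMatrix_apply]

lemma transpose_mul_self_diagonal_mul_permMatrix {s : ι → ℝ} (hs : ∀ i, s i * s i = 1)
    (σ : Equiv.Perm ι) :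
    (diagonal s * σ.permMatrix ℝ)ᵀ * (diagonal s * σ.permMatrix ℝ) = 1 := by
  have hss : diagonal s * diagonal s = 1 := by
    rw [diagonal_mul_diagonal, ← diagonal_one]
    exact congrArg diagonal (funext hs)
  rw [transpose_mul, diagonal_transpose, Matrix.mul_assoc, ← Matrix.mul_assoc (diagonal s), hss,
    Matrix.one_mul, transpose_permMatrix, ← permMatrix_mul, mul_inv_cancel,
    permMatrix_one]

noncomputable def alignedSignedPerm (W : Matrix ι ι ℝ) (σ : Equiv.Perm ι) : Matrix ι ι ℝ :=
  diagonal (fun i ↦ if 0 ≤ W i (σ i) then 1 else -1) * σ.permMatrix ℝ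

lemma isSignedPerm_alignedSignedPerm {n : ℕ} (W : Matrix (Fin n) (Fin n) ℝ)
    (σ : Equiv.Perm (Fin n)) : IsSignedPerm (alignedSignedPerm W σ) := by
  refine ⟨transpose_mul_self_diagonal_mul_permMatrix (fun i ↦ by split_ifs <;> norm_num) σ,
    fun i j ↦ ?_⟩
  rw [alignedSignedPerm, diagonal_mul_permMatrix_apply]
  split_ifs <;> simp

lemma trace_transpose_mul_alignedSignedPerm (W : Matrix ι ι ℝ) (σ : Equiv.Perm ι) :
    trace (Wᵀ * alignedSignedPerm W σ) = ∑ i, |W i (σ i)| := by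
  rw [trace_mul_comm, trace]
  refine sum_congr rfl fun i _ ↦ ?_
  rw [diag_apply, mul_apply]
  simp only [alignedSignedPerm, diagonal_mul_permMatrix_apply, transpose_apply, ite_mul, zero_mul,
    sum_ite_eq, mem_univ, if_true]
  split_ifs with h
  · rw [abs_of_nonneg h, one_mul]
  · rw [abs_of_neg (not_le.mp h)]; ring

end SignedPerm

lemma frobSq_eq_trace_transpose_mul_self {n : ℕ} (A : Matrix (Fin n) (Fin n) ℝ) :
    frobSq A = trace (Aᵀ * A) := by
  simp only [frobSq, trace, diag_apply, mul_apply, transpose_apply, sq]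
  exact sum_comm

lemma frobSq_sub_of_transpose_mul_self {n : ℕ} {A B : Matrix (Fin n) (Fin n) ℝ}
    (hA : Aᵀ * A = 1) (hB : Bᵀ * B = 1) : frobSq (A - B) = 2 * (n - trace (Aᵀ * B)) := by
  have hBA : trace (Bᵀ * A) = trace (Aᵀ * B) := by
    rw [← trace_transpose, transpose_mul, transpose_transpose]
  rw [frobSq_eq_trace_transpose_mul_self, transpose_sub, sub_mul, mul_sub, mul_sub, hA, hB,
    trace_sub, trace_sub, trace_sub, hBA, trace_one, Fintype.card_fin]
  ring

theorem exists_isSignedPerm_frobSq_sub_le {n : ℕ} {W : Matrix (Fin n) (Fin n) ℝ}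
    (hW : Wᵀ * W = 1) : ∃ P, IsSignedPerm P ∧ frobSq (W - P) ≤ 2 * (n - l4pow4 W) := by
  obtain ⟨σ, hσ⟩ := exists_perm_sum_mul_le_of_mem_doublyStochastic
    (of_sq_mem_doublyStochastic hW) (of fun i j ↦ W i j ^ 2)
  have hl4 : l4pow4 W ≤ ∑ i, W i (σ i) ^ 2 := by
    simpa only [l4pow4, of_apply, ← pow_add] using hσ
  have hsq : ∑ i, W i (σ i) ^ 2 ≤ ∑ i, |W i (σ i)| := sum_le_sum fun i _ ↦ by
    rw [← sq_abs]
    exact pow_le_of_le_one (abs_nonneg _) (abs_apply_le_one_of_transpose_mul_self hW _ _)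
      two_ne_zero
  refine ⟨alignedSignedPerm W σ, isSignedPerm_alignedSignedPerm W σ, ?_⟩
  rw [frobSq_sub_of_transpose_mul_self hW (isSignedPerm_alignedSignedPerm W σ).1,
    trace_transpose_mul_alignedSignedPerm]
  linarith

theorem l4_approx_maxima_orthogonal_general {n : ℕ}
    (W : Matrix (Fin n) (Fin n) ℝ) (hW : Wᵀ * W = 1)
    (ε : ℝ)
    (h : 1 - ε ≤ (1 / (n : ℝ)) * l4pow4 W) :
    ∃ P : Matrix (Fin n) (Fin n) ℝ, IsSignedPerm P ∧
      (1 / (n : ℝ)) * frobSq (W - P) ≤ 2 * ε := by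
  obtain ⟨P, hP, hdist⟩ := exists_isSignedPerm_frobSq_sub_le hW
  refine ⟨P, hP, ?_⟩
  -- also for `n = 0`, where `1 / n = 0`
  have hnn : (n : ℝ) / n ≤ 1 := div_self_le_one _
  calc (1 / (n : ℝ)) * frobSq (W - P) ≤ (1 / (n : ℝ)) * (2 * (n - l4pow4 W)) :=
        mul_le_mul_of_nonneg_left hdist (by positivity)
    _ = 2 * ((n : ℝ) / n) - 2 * ((1 / (n : ℝ)) * l4pow4 W) := by ring
    _ ≤ 2 * ε := by linarith

/-- Approximate maxima of the ℓ⁴-norm over the orthogonal group: if an orthogonal `W`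
satisfies `(1/n)‖W‖₄⁴ ≥ 1 - ε` for `ε ∈ [0,1]`, then `W` is within squared Frobenius
distance `2nε` of some signed permutation matrix. -/
theorem l4_approx_maxima_orthogonal {n : ℕ} (hn : 0 < n)
    (W : Matrix (Fin n) (Fin n) ℝ) (hW : Wᵀ * W = 1)
    (ε : ℝ) (hε : ε ∈ Set.Icc (0 : ℝ) 1)
    (h : 1 - ε ≤ (1 / (n : ℝ)) * l4pow4 W) :
    ∃ P : Matrix (Fin n) (Fin n) ℝ, IsSignedPerm P ∧
      (1 / (n : ℝ)) * frobSq (W - P) ≤ 2 * ε :=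
  l4_approx_maxima_orthogonal_general W hW ε h
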